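/- arXiv:2404.08634 — 4 statements merged into one kernel-verified Lean document; each statement's English description precedes it below -/
import Mathlib

section
/- Let T ≥ 1, let ε ∈ [0,1], let j* ∈ {1,…,T}, and let A ∈ ℝ^{T×T} be a row-stochastic matrix that is ε-sink-collapsed to j*. Then there exists a matrix A₀ ∈ ℝ^{T×T} of rank at most 1 such that ‖A − A₀‖₂ ≤ ε·√(2T), where ‖·‖₂ denotes the operator (spectral) norm; i.e., A is within ε·√(2T) in operator norm of a rank-one matrix. -/
/-!
The rank-one matrix whose rows all equal the basis vector `e_{j*}` is within `√2 ε` of `A`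
row by row in the Euclidean norm: the `j*` entry of a row of `A - A₀` is minus the off-`j*`
mass `s ≤ ε`, and the other entries have squares summing to at most `s²`. The Frobenius norm,
which dominates the operator norm, is then at most `ε √(2T)`.
-/

open Finset

/-- The operator (spectral) norm of a real matrix: its norm as a linear map between
Euclidean spaces. -/
noncomputable def opNorm {m n : ℕ} (A : Matrix (Fin m) (Fin n) ℝ) : ℝ :=
  ‖LinearMap.toContinuousLinearMap (Matrix.toEuclideanLin A)‖

lemma opNorm_le_sqrt_sum_sq {m n : ℕ} (A : Matrix (Fin m) (Fin n) ℝ) :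
    opNorm A ≤ √(∑ i, ∑ j, A i j ^ 2) := by
  refine ContinuousLinearMap.opNorm_le_bound _ (Real.sqrt_nonneg _) fun x => ?_
  rw [EuclideanSpace.norm_eq, EuclideanSpace.norm_eq, ← Real.sqrt_mul (by positivity)]
  refine Real.sqrt_le_sqrt ?_
  rw [sum_mul]
  refine sum_le_sum fun i _ => ?_
  simpa [Matrix.toLpLin_apply, Matrix.mulVec, dotProduct] using
    sum_mul_sq_le_sq_mul_sq univ (A i) x

lemma opNorm_le_of_sum_sq_row_le {m n : ℕ} (A : Matrix (Fin m) (Fin n) ℝ) {c : ℝ}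
    (hc : 0 ≤ c) (hrow : ∀ i, ∑ j, A i j ^ 2 ≤ c ^ 2) : opNorm A ≤ c * √m :=
  calc opNorm A ≤ √(∑ i, ∑ j, A i j ^ 2) := opNorm_le_sqrt_sum_sq A
    _ ≤ √(∑ _i : Fin m, c ^ 2) := Real.sqrt_le_sqrt (sum_le_sum fun i _ => hrow i)
    _ = c * √m := by
      rw [sum_const, card_univ, Fintype.card_fin, nsmul_eq_mul, Real.sqrt_mul (by positivity),
        Real.sqrt_sq hc, mul_comm]

lemma sum_sq_sub_single_le {ι : Type*} [Fintype ι] [DecidableEq ι] {a : ι → ℝ}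
    (ha : ∀ j, 0 ≤ a j) (ha_sum : ∑ j, a j = 1) (k : ι) :
    ∑ j, (a j - (Pi.single k 1 : ι → ℝ) j) ^ 2 ≤ 2 * (∑ j ∈ univ.erase k, a j) ^ 2 := by
  have hk : a k - 1 = -∑ j ∈ univ.erase k, a j := by
    rw [← add_sum_erase _ _ (mem_univ k)] at ha_sum
    linarith
  have hoff : ∑ j ∈ univ.erase k, (a j - (Pi.single k 1 : ι → ℝ) j) ^ 2
      = ∑ j ∈ univ.erase k, a j ^ 2 :=
    sum_congr rfl fun j hj => by rw [Pi.single_eq_of_ne (ne_of_mem_erase hj), sub_zero]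
  rw [← add_sum_erase _ _ (mem_univ k), hoff, Pi.single_eq_same, hk, neg_sq, two_mul]
  gcongr
  exact sum_sq_le_sq_sum_of_nonneg fun j _ => ha j

theorem sink_collapsed_near_rank_one_general
    (T : ℕ) (ε : ℝ) (hε0 : 0 ≤ ε)
    (jstar : Fin T) (A : Matrix (Fin T) (Fin T) ℝ)
    (hA_nonneg : ∀ i j, 0 ≤ A i j) (hA_rows : ∀ i, ∑ j, A i j = 1)
    (hcollapse : ∀ i, ∑ j ∈ Finset.univ.erase jstar, A i j ≤ ε) :
    ∃ A₀ : Matrix (Fin T) (Fin T) ℝ,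
      A₀.rank ≤ 1 ∧ opNorm (A - A₀) ≤ ε * Real.sqrt (2 * T) := by
  set A₀ := Matrix.vecMulVec 1 (Pi.single jstar 1 : Fin T → ℝ)
  refine ⟨A₀, Matrix.rank_vecMulVec_le _ _, ?_⟩
  have hrow : ∀ i, ∑ j, (A - A₀) i j ^ 2 ≤ (ε * √2) ^ 2 := fun i =>
    calc ∑ j, (A - A₀) i j ^ 2 = ∑ j, (A i j - (Pi.single jstar 1 : Fin T → ℝ) j) ^ 2 := by
          simp [A₀]
      _ ≤ 2 * (∑ j ∈ univ.erase jstar, A i j) ^ 2 :=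
          sum_sq_sub_single_le (hA_nonneg i) (hA_rows i) jstar
      _ ≤ 2 * ε ^ 2 := by
          gcongr
          exacts [sum_nonneg fun j _ => hA_nonneg i j, hcollapse i]
      _ = (ε * √2) ^ 2 := by rw [mul_pow, Real.sq_sqrt zero_le_two, mul_comm]
  calc opNorm (A - A₀) ≤ ε * √2 * √T := opNorm_le_of_sum_sq_row_le _ (by positivity) hrow
    _ = ε * √(2 * T) := by rw [Real.sqrt_mul zero_le_two, mul_assoc]

/-- A row-stochastic matrix that is ε-sink-collapsed to a column `j*`
(with `ε ∈ [0,1]`) is within `ε·√(2T)`, in operator (spectral) norm, of a matrix of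
rank at most one. -/
theorem sink_collapsed_near_rank_one
    (T : ℕ) (hT : 1 ≤ T) (ε : ℝ) (hε0 : 0 ≤ ε) (hε1 : ε ≤ 1)
    (jstar : Fin T) (A : Matrix (Fin T) (Fin T) ℝ)
    (hA_nonneg : ∀ i j, 0 ≤ A i j) (hA_rows : ∀ i, ∑ j, A i j = 1)
    (hcollapse : ∀ i, ∑ j ∈ Finset.univ.erase jstar, A i j ≤ ε) :
    ∃ A₀ : Matrix (Fin T) (Fin T) ℝ,
      A₀.rank ≤ 1 ∧ opNorm (A - A₀) ≤ ε * Real.sqrt (2 * T) :=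
  sink_collapsed_near_rank_one_general T ε hε0 jstar A hA_nonneg hA_rows hcollapse
end

section
/- Let T ≥ 1, let ε ∈ [0,1], let j* ∈ {1,…,T}, and let A ∈ ℝ^{T×T} be a row-stochastic matrix that is ε-sink-collapsed to j*. Let G ∈ ℝ^{T×T} be arbitrary, and define Ḡ ∈ ℝ^{T×T} row-wise by letting the i-th row of Ḡ equal (diag(a⁽ⁱ⁾) − a⁽ⁱ⁾·(a⁽ⁱ⁾)ᵀ)·g⁽ⁱ⁾, where a⁽ⁱ⁾ is the i-th row of A and g⁽ⁱ⁾ is the i-th row of G. Then ‖Ḡ‖_F ≤ 2ε·‖G‖_F, where ‖·‖_F denotes the Frobenius norm. -/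
open Finset Matrix

lemma row_bound {T : ℕ} (ε : ℝ) (hε0 : 0 ≤ ε) (jstar : Fin T)
    (a g : Fin T → ℝ) (ha : ∀ j, 0 ≤ a j) (hsum : ∑ j, a j = 1)
    (hcol : ∑ j ∈ Finset.univ.erase jstar, a j ≤ ε) :
    ∑ j, ((Matrix.diagonal a - Matrix.vecMulVec a a).mulVec g j) ^ 2
      ≤ (2 * ε) ^ 2 * ∑ j, (g j) ^ 2 := by
  set M : Fin T → Fin T → ℝ := fun j k => (if j = k then a j else 0) - a j * a k with hMdef
  have hM : ∀ j, (Matrix.diagonal a - Matrix.vecMulVec a a).mulVec g j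
      = ∑ k, M j k * g k := by
    intro j
    simp [Matrix.mulVec, dotProduct, Matrix.diagonal, Matrix.vecMulVec, hMdef]
  have ha1 : ∀ j, a j ≤ 1 := by
    intro j
    calc a j ≤ ∑ k, a k := Finset.single_le_sum (fun k _ => ha k) (Finset.mem_univ j)
    _ = 1 := hsum
  have hpair : ∀ j k, j ≠ k → a j + a k ≤ 1 := by
    intro j k hjk
    have : ∑ x ∈ ({j, k} : Finset (Fin T)), a x ≤ ∑ x, a x :=
      Finset.sum_le_sum_of_subset_of_nonneg (Finset.subset_univ _) (fun x _ _ => ha x)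
    rwa [Finset.sum_pair hjk, hsum] at this
  set t : ℝ := ∑ j, a j * (1 - a j) with htdef
  have hMsq : ∑ j, ∑ k, (M j k) ^ 2 ≤ t ^ 2 := by
    have : t ^ 2 = ∑ j, ∑ k, (a j * (1 - a j)) * (a k * (1 - a k)) := by
      rw [sq, htdef, Finset.sum_mul_sum]
    rw [this]
    refine Finset.sum_le_sum (fun j _ => Finset.sum_le_sum (fun k _ => ?_))
    by_cases hjk : j = k
    · subst hjk
      simp only [hMdef, eq_self_iff_true, if_true]
      exact le_of_eq (by ring)
    · simp only [hMdef, if_neg hjk]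
      have hjk1 : a j ≤ 1 - a k := by linarith [hpair j k hjk]
      have hkj1 : a k ≤ 1 - a j := by linarith [hpair j k hjk]
      have h4 : a j * a k ≤ (1 - a k) * (1 - a j) :=
        mul_le_mul hjk1 hkj1 (ha k) (by linarith [ha1 k])
      nlinarith [mul_nonneg (ha j) (ha k), h4]
  have ht : t ≤ 2 * ε := by
    have hsplit : ∑ j ∈ Finset.univ.erase jstar, a j + a jstar = 1 := by
      rw [Finset.sum_erase_add _ _ (Finset.mem_univ jstar), hsum]
    have h1 : a jstar * (1 - a jstar) ≤ ε := by
      have h2 : 1 - a jstar = ∑ j ∈ Finset.univ.erase jstar, a j := by linarith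
      have : a jstar * (1 - a jstar) ≤ 1 * (1 - a jstar) :=
        mul_le_mul_of_nonneg_right (ha1 jstar) (by linarith [ha1 jstar])
      rw [one_mul] at this
      linarith [h2 ▸ hcol]
    have h3 : ∑ j ∈ Finset.univ.erase jstar, a j * (1 - a j) ≤ ε := by
      calc ∑ j ∈ Finset.univ.erase jstar, a j * (1 - a j)
          ≤ ∑ j ∈ Finset.univ.erase jstar, a j := by
            refine Finset.sum_le_sum (fun j _ => ?_)
            calc a j * (1 - a j) ≤ a j * 1 :=
              mul_le_mul_of_nonneg_left (by linarith [ha j]) (ha j)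
            _ = a j := mul_one _
        _ ≤ ε := hcol
    have : t = ∑ j ∈ Finset.univ.erase jstar, a j * (1 - a j) + a jstar * (1 - a jstar) := by
      rw [htdef, Finset.sum_erase_add _ _ (Finset.mem_univ jstar)]
    linarith
  have ht0 : 0 ≤ t := Finset.sum_nonneg fun j _ =>
    mul_nonneg (ha j) (by linarith [ha1 j])
  have hg0 : 0 ≤ ∑ k, (g k) ^ 2 := Finset.sum_nonneg fun k _ => sq_nonneg _
  calc ∑ j, ((Matrix.diagonal a - Matrix.vecMulVec a a).mulVec g j) ^ 2
      = ∑ j, (∑ k, M j k * g k) ^ 2 := by simp_rw [hM]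
    _ ≤ ∑ j, (∑ k, (M j k) ^ 2) * ∑ k, (g k) ^ 2 :=
        Finset.sum_le_sum fun j _ => Finset.sum_mul_sq_le_sq_mul_sq _ _ _
    _ = (∑ j, ∑ k, (M j k) ^ 2) * ∑ k, (g k) ^ 2 := by rw [Finset.sum_mul]
    _ ≤ t ^ 2 * ∑ k, (g k) ^ 2 := mul_le_mul_of_nonneg_right hMsq hg0
    _ ≤ (2 * ε) ^ 2 * ∑ k, (g k) ^ 2 := by
        apply mul_le_mul_of_nonneg_right _ hg0
        exact pow_le_pow_left₀ ht0 ht 2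

/-- Let `A : ℝ^{T×T}` be row-stochastic and ε-sink-collapsed to `j*`
(`ε ∈ [0,1]`). For an arbitrary `G : ℝ^{T×T}`, let `Ḡ` be the matrix whose `i`-th row is
`(diag(a⁽ⁱ⁾) − a⁽ⁱ⁾·(a⁽ⁱ⁾)ᵀ) · g⁽ⁱ⁾`, where `a⁽ⁱ⁾` and `g⁽ⁱ⁾` are the `i`-th rows of
`A` and `G`. Then `‖Ḡ‖_F ≤ 2ε‖G‖_F` (Frobenius norms). -/
theorem softmax_jacobian_rowwise_frobenius_bound
    (T : ℕ) (hT : 1 ≤ T) (ε : ℝ) (hε0 : 0 ≤ ε) (hε1 : ε ≤ 1)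
    (jstar : Fin T) (A : Matrix (Fin T) (Fin T) ℝ)
    (hA_nonneg : ∀ i j, 0 ≤ A i j) (hA_rows : ∀ i, ∑ j, A i j = 1)
    (hcollapse : ∀ i, ∑ j ∈ Finset.univ.erase jstar, A i j ≤ ε)
    (G Gbar : Matrix (Fin T) (Fin T) ℝ)
    (hGbar : ∀ i, Gbar i =
      (Matrix.diagonal (A i) - Matrix.vecMulVec (A i) (A i)).mulVec (G i)) :
    Real.sqrt (∑ i, ∑ j, (Gbar i j) ^ 2)
      ≤ 2 * ε * Real.sqrt (∑ i, ∑ j, (G i j) ^ 2) := by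
  have key : ∑ i, ∑ j, (Gbar i j) ^ 2 ≤ (2 * ε) ^ 2 * ∑ i, ∑ j, (G i j) ^ 2 := by
    rw [Finset.mul_sum]
    refine Finset.sum_le_sum fun i _ => ?_
    have := row_bound ε hε0 jstar (A i) (G i) (hA_nonneg i) (hA_rows i) (hcollapse i)
    simpa [hGbar i] using this
  calc Real.sqrt (∑ i, ∑ j, (Gbar i j) ^ 2)
      ≤ Real.sqrt ((2 * ε) ^ 2 * ∑ i, ∑ j, (G i j) ^ 2) := Real.sqrt_le_sqrt key
    _ = 2 * ε * Real.sqrt (∑ i, ∑ j, (G i j) ^ 2) := by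
        rw [Real.sqrt_mul (sq_nonneg _), Real.sqrt_sq (by positivity)]
end

section
/- Let T, d ≥ 1, let ε ∈ [0,1], let j* ∈ {1,…,T}, and let A ∈ ℝ^{T×T} be a row-stochastic matrix that is ε-sink-collapsed to j*. Let X ∈ ℝ^{T×d}, K ∈ ℝ^{T×d}, and G ∈ ℝ^{T×T} be arbitrary, and define Ḡ ∈ ℝ^{T×T} row-wise by letting the i-th row of Ḡ equal (diag(a⁽ⁱ⁾) − a⁽ⁱ⁾·(a⁽ⁱ⁾)ᵀ)·g⁽ⁱ⁾, where a⁽ⁱ⁾ is the i-th row of A and g⁽ⁱ⁾ the i-th row of G. Then ‖Xᵀ·((1/√d)·Ḡ·K)‖_F ≤ (2ε/√d)·‖X‖₂·‖K‖₂·‖G‖_F; i.e., the gradient of the loss with respect to the query weight matrix W_Q in causal self-attention is bounded by (2ε/√d)·‖X‖₂·‖K‖₂·‖∂L/∂A‖_F. -/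
open Finset Matrix

/-- The Frobenius norm of a real matrix. -/
noncomputable def frobNorm {m n : ℕ} (A : Matrix (Fin m) (Fin n) ℝ) : ℝ :=
  Real.sqrt (∑ i, ∑ j, (A i j) ^ 2)

open scoped Matrix.Norms.L2Operator in
lemma opNorm_eq_norm {m n : ℕ} (A : Matrix (Fin m) (Fin n) ℝ) : opNorm A = ‖A‖ := by
  rw [Matrix.l2_opNorm_def]; rfl

open scoped Matrix.Norms.L2Operator in
lemma opNorm_nonneg' {m n : ℕ} (A : Matrix (Fin m) (Fin n) ℝ) : 0 ≤ opNorm A := by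
  rw [opNorm_eq_norm]; exact norm_nonneg _

open scoped Matrix.Norms.L2Operator in
lemma opNorm_transpose {m n : ℕ} (A : Matrix (Fin m) (Fin n) ℝ) : opNorm Aᵀ = opNorm A := by
  rw [opNorm_eq_norm, opNorm_eq_norm, ← Matrix.conjTranspose_eq_transpose_of_trivial,
    Matrix.l2_opNorm_conjTranspose]

open scoped Matrix.Norms.L2Operator in
lemma mulVec_sq_sum_le {m n : ℕ} (A : Matrix (Fin m) (Fin n) ℝ) (x : Fin n → ℝ) :
    ∑ i, (A.mulVec x i)^2 ≤ opNorm A ^ 2 * ∑ j, (x j)^2 := by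
  have h := Matrix.l2_opNorm_mulVec A ((WithLp.equiv 2 (Fin n → ℝ)).symm x)
  rw [← opNorm_eq_norm] at h
  have hnx : ‖(WithLp.equiv 2 (Fin n → ℝ)).symm x‖ = Real.sqrt (∑ j, (x j)^2) := by
    rw [EuclideanSpace.norm_eq]
    simp [Real.norm_eq_abs, sq_abs]
  have hny : ‖(EuclideanSpace.equiv (Fin m) ℝ).symm (A *ᵥ (WithLp.equiv 2 (Fin n → ℝ)).symm x)‖
      = Real.sqrt (∑ i, (A.mulVec x i)^2) := by
    rw [EuclideanSpace.norm_eq]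
    simp [Real.norm_eq_abs, sq_abs]
  rw [hnx, hny] at h
  have h1 : (0:ℝ) ≤ ∑ i, (A.mulVec x i)^2 := Finset.sum_nonneg fun _ _ => sq_nonneg _
  have h2 : (0:ℝ) ≤ ∑ j, (x j)^2 := Finset.sum_nonneg fun _ _ => sq_nonneg _
  calc ∑ i, (A.mulVec x i)^2 = Real.sqrt (∑ i, (A.mulVec x i)^2) ^ 2 := (Real.sq_sqrt h1).symm
    _ ≤ (opNorm A * Real.sqrt (∑ j, (x j)^2)) ^ 2 := by
        apply pow_le_pow_left₀ (Real.sqrt_nonneg _) h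
    _ = opNorm A ^ 2 * ∑ j, (x j)^2 := by
        rw [mul_pow, Real.sq_sqrt h2]

lemma sq_sum_left {m n p : ℕ} (X : Matrix (Fin m) (Fin n) ℝ) (B : Matrix (Fin m) (Fin p) ℝ) :
    ∑ i, ∑ j, ((Xᵀ * B) i j)^2 ≤ opNorm X ^ 2 * ∑ i, ∑ j, (B i j)^2 := by
  calc ∑ i, ∑ j, ((Xᵀ * B) i j)^2 = ∑ j, ∑ i, ((Xᵀ * B) i j)^2 := Finset.sum_comm
    _ = ∑ j, ∑ i, (Xᵀ.mulVec (fun r => B r j) i)^2 := by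
        simp [Matrix.mul_apply, Matrix.mulVec, dotProduct]
    _ ≤ ∑ j, opNorm Xᵀ ^ 2 * ∑ k, (B k j)^2 :=
        Finset.sum_le_sum fun j _ => mulVec_sq_sum_le Xᵀ _
    _ = opNorm X ^ 2 * ∑ i, ∑ j, (B i j)^2 := by
        rw [← Finset.mul_sum, opNorm_transpose, Finset.sum_comm]

lemma sq_sum_right {m n p : ℕ} (M : Matrix (Fin m) (Fin n) ℝ) (K : Matrix (Fin n) (Fin p) ℝ) :
    ∑ i, ∑ j, ((M * K) i j)^2 ≤ opNorm K ^ 2 * ∑ i, ∑ j, (M i j)^2 := by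
  calc ∑ i, ∑ j, ((M * K) i j)^2 = ∑ i, ∑ j, (Kᵀ.mulVec (M i) j)^2 := by
        simp [Matrix.mul_apply, Matrix.mulVec, dotProduct, mul_comm]
    _ ≤ ∑ i, opNorm Kᵀ ^ 2 * ∑ k, (M i k)^2 :=
        Finset.sum_le_sum fun i _ => mulVec_sq_sum_le Kᵀ _
    _ = opNorm K ^ 2 * ∑ i, ∑ j, (M i j)^2 := by
        rw [← Finset.mul_sum, opNorm_transpose]

lemma variance_min {n : ℕ} (a g : Fin n → ℝ) (h1 : ∑ j, a j = 1) (t : ℝ) :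
    ∑ j, a j * (g j - (∑ k, a k * g k))^2 ≤ ∑ j, a j * (g j - t)^2 := by
  set c := ∑ k, a k * g k with hc
  have key : ∑ j, a j * (g j - t)^2 - ∑ j, a j * (g j - c)^2 = (c - t)^2 := by
    rw [← Finset.sum_sub_distrib]
    have h : ∀ j ∈ Finset.univ, a j * (g j - t)^2 - a j * (g j - c)^2
        = ((c - t) * 2) * (a j * g j) - ((c - t) * (t + c)) * a j := fun j _ => by ring
    rw [Finset.sum_congr rfl h, Finset.sum_sub_distrib, ← Finset.mul_sum, ← Finset.mul_sum,
      h1, ← hc]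
    ring
  linarith [sq_nonneg (c - t)]

lemma row_bound_s9 {n : ℕ} (jstar : Fin n) (a g : Fin n → ℝ) (ε : ℝ)
    (ha0 : ∀ j, 0 ≤ a j) (ha1 : ∑ j, a j = 1)
    (hsε : ∑ j ∈ Finset.univ.erase jstar, a j ≤ ε) :
    ∑ j, (a j * (g j - ∑ k, a k * g k))^2 ≤ 4 * ε^2 * ∑ j, (g j)^2 := by
  set s := ∑ j ∈ Finset.univ.erase jstar, a j with hsdef
  set N2 := ∑ j, (g j)^2 with hN2def
  set c := ∑ k, a k * g k with hcdef
  have hs0 : 0 ≤ s := Finset.sum_nonneg fun j _ => ha0 j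
  have hN20 : 0 ≤ N2 := Finset.sum_nonneg fun j _ => sq_nonneg _
  have hpair : ∀ k, k ≠ jstar → (g jstar - g k)^2 ≤ 2 * N2 := by
    intro k hk
    have hsub : (g jstar)^2 + (g k)^2 ≤ N2 := by
      have := Finset.sum_le_sum_of_subset_of_nonneg
        (Finset.subset_univ ({jstar, k} : Finset (Fin n)))
        (fun j _ _ => sq_nonneg (g j))
      rwa [Finset.sum_pair (Ne.symm hk)] at this
    nlinarith [sq_nonneg (g jstar + g k)]
  have hcj : g jstar - c = ∑ k ∈ Finset.univ.erase jstar, a k * (g jstar - g k) := by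
    have e1 : g jstar - c = ∑ k, a k * (g jstar - g k) := by
      simp_rw [mul_sub]
      rw [Finset.sum_sub_distrib, ← Finset.sum_mul, ha1, one_mul, ← hcdef]
    rw [e1, ← Finset.sum_erase_add _ _ (Finset.mem_univ jstar)]
    simp
  set M := Real.sqrt (2 * N2) with hMdef
  have hM0 : 0 ≤ M := Real.sqrt_nonneg _
  have hMsq : M^2 = 2 * N2 := Real.sq_sqrt (by linarith)
  have habs : |g jstar - c| ≤ s * M := by
    rw [hcj]
    calc |∑ k ∈ Finset.univ.erase jstar, a k * (g jstar - g k)|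
        ≤ ∑ k ∈ Finset.univ.erase jstar, |a k * (g jstar - g k)| :=
          Finset.abs_sum_le_sum_abs _ _
      _ ≤ ∑ k ∈ Finset.univ.erase jstar, a k * M := by
          apply Finset.sum_le_sum
          intro k hk
          rw [abs_mul, abs_of_nonneg (ha0 k)]
          apply mul_le_mul_of_nonneg_left _ (ha0 k)
          rw [← Real.sqrt_sq_eq_abs, hMdef]
          exact Real.sqrt_le_sqrt (hpair k (Finset.ne_of_mem_erase hk))
      _ = s * M := by rw [← Finset.sum_mul]
  have h1 : (g jstar - c)^2 ≤ 2 * s^2 * N2 := by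
    have := pow_le_pow_left₀ (abs_nonneg _) habs 2
    rw [sq_abs, mul_pow, hMsq] at this
    linarith
  have hvar : ∑ j, a j * (g j - c)^2 ≤ 2 * s * N2 := by
    calc ∑ j, a j * (g j - c)^2 ≤ ∑ j, a j * (g j - g jstar)^2 := variance_min a g ha1 _
      _ = ∑ j ∈ Finset.univ.erase jstar, a j * (g j - g jstar)^2 := by
          rw [← Finset.sum_erase_add _ _ (Finset.mem_univ jstar)]; simp
      _ ≤ ∑ j ∈ Finset.univ.erase jstar, a j * (2 * N2) := by
          apply Finset.sum_le_sum
          intro j hj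
          apply mul_le_mul_of_nonneg_left _ (ha0 j)
          have := hpair j (Finset.ne_of_mem_erase hj)
          nlinarith
      _ = 2 * s * N2 := by rw [← Finset.sum_mul]; ring
  have h2 : ∑ j ∈ Finset.univ.erase jstar, (a j * (g j - c))^2 ≤ 2 * s^2 * N2 := by
    calc ∑ j ∈ Finset.univ.erase jstar, (a j * (g j - c))^2
        ≤ ∑ j ∈ Finset.univ.erase jstar, s * (a j * (g j - c)^2) := by
          apply Finset.sum_le_sum
          intro j hj
          have haj : a j ≤ s := Finset.single_le_sum (fun k _ => ha0 k) hj
          have key := mul_le_mul_of_nonneg_right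
            (mul_le_mul_of_nonneg_right haj (ha0 j)) (sq_nonneg (g j - c))
          calc (a j * (g j - c))^2 = (a j * a j) * (g j - c)^2 := by ring
            _ ≤ (s * a j) * (g j - c)^2 := key
            _ = s * (a j * (g j - c)^2) := by ring
      _ = s * ∑ j ∈ Finset.univ.erase jstar, a j * (g j - c)^2 := by rw [Finset.mul_sum]
      _ ≤ s * ∑ j, a j * (g j - c)^2 := by
          apply mul_le_mul_of_nonneg_left _ hs0
          apply Finset.sum_le_sum_of_subset_of_nonneg (Finset.subset_univ _)
          intro j _ _
          exact mul_nonneg (ha0 j) (sq_nonneg _)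
      _ ≤ s * (2 * s * N2) := mul_le_mul_of_nonneg_left hvar hs0
      _ = 2 * s^2 * N2 := by ring
  have hajstar : a jstar ≤ 1 := by
    rw [← ha1]
    exact Finset.single_le_sum (fun k _ => ha0 k) (Finset.mem_univ jstar)
  have h3 : (a jstar * (g jstar - c))^2 ≤ 2 * s^2 * N2 := by
    have ha2 : a jstar ^ 2 ≤ 1 := by nlinarith [ha0 jstar]
    have key := mul_le_mul_of_nonneg_right ha2 (sq_nonneg (g jstar - c))
    calc (a jstar * (g jstar - c))^2 = a jstar ^ 2 * (g jstar - c)^2 := by ring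
      _ ≤ 1 * (g jstar - c)^2 := key
      _ = (g jstar - c)^2 := one_mul _
      _ ≤ 2 * s^2 * N2 := h1
  have htot : ∑ j, (a j * (g j - c))^2
      = (∑ j ∈ Finset.univ.erase jstar, (a j * (g j - c))^2) + (a jstar * (g jstar - c))^2 :=
    (Finset.sum_erase_add _ _ (Finset.mem_univ jstar)).symm
  rw [htot]
  have hsq : s^2 ≤ ε^2 := pow_le_pow_left₀ hs0 hsε 2
  nlinarith [mul_le_mul_of_nonneg_right hsq hN20]

lemma Gbar_entry {n : ℕ} (a g : Fin n → ℝ) (j : Fin n) :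
    ((Matrix.diagonal a - Matrix.vecMulVec a a).mulVec g) j
      = a j * (g j - ∑ k, a k * g k) := by
  simp [Matrix.mulVec, dotProduct, Matrix.sub_apply, Matrix.diagonal_apply,
    Matrix.vecMulVec_apply, sub_mul, Finset.sum_sub_distrib, ite_mul,
    Finset.sum_ite_eq, mul_sub, Finset.mul_sum, mul_assoc]

/-- Let `A : ℝ^{T×T}` be row-stochastic and ε-sink-collapsed to `j*`
(`ε ∈ [0,1]`). For arbitrary `X, K : ℝ^{T×d}` and `G : ℝ^{T×T}`, let `Ḡ` be the matrix
whose `i`-th row is `(diag(a⁽ⁱ⁾) − a⁽ⁱ⁾·(a⁽ⁱ⁾)ᵀ) · g⁽ⁱ⁾` (rows of `A` and `G`).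
Then the gradient of the loss w.r.t. the query weights,
`∂L/∂W_Q = Xᵀ·((1/√d)·Ḡ·K)`, satisfies
`‖Xᵀ·((1/√d)·Ḡ·K)‖_F ≤ (2ε/√d)·‖X‖₂·‖K‖₂·‖G‖_F`. -/
theorem query_gradient_vanishes_of_sink_collapse
    (T d : ℕ) (hT : 1 ≤ T) (hd : 1 ≤ d)
    (ε : ℝ) (hε0 : 0 ≤ ε) (hε1 : ε ≤ 1)
    (jstar : Fin T) (A : Matrix (Fin T) (Fin T) ℝ)
    (hA_nonneg : ∀ i j, 0 ≤ A i j) (hA_rows : ∀ i, ∑ j, A i j = 1)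
    (hcollapse : ∀ i, ∑ j ∈ Finset.univ.erase jstar, A i j ≤ ε)
    (X K : Matrix (Fin T) (Fin d) ℝ)
    (G Gbar : Matrix (Fin T) (Fin T) ℝ)
    (hGbar : ∀ i, Gbar i =
      (Matrix.diagonal (A i) - Matrix.vecMulVec (A i) (A i)).mulVec (G i)) :
    frobNorm (Xᵀ * ((1 / Real.sqrt d) • (Gbar * K)))
      ≤ (2 * ε / Real.sqrt d) * opNorm X * opNorm K * frobNorm G := by
  have hd0 : (0:ℝ) < Real.sqrt d := Real.sqrt_pos.2 (by exact_mod_cast Nat.lt_of_lt_of_le Nat.zero_lt_one hd)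
  have hX := opNorm_nonneg' X
  have hK := opNorm_nonneg' K
  -- entrywise formula for Gbar
  have hGrow : ∀ i j, Gbar i j = A i j * (G i j - ∑ k, A i k * G i k) := by
    intro i j
    rw [hGbar i]
    exact Gbar_entry (A i) (G i) j
  -- row-wise bound on Gbar
  have hc3 : ∑ i, ∑ j, (Gbar i j)^2 ≤ 4 * ε^2 * ∑ i, ∑ j, (G i j)^2 := by
    rw [Finset.mul_sum]
    apply Finset.sum_le_sum
    intro i _
    have h := row_bound_s9 jstar (A i) (G i) ε (hA_nonneg i) (hA_rows i) (hcollapse i)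
    simp_rw [hGrow i]
    exact h
  -- combine
  have hc2 := sq_sum_right Gbar K
  have hc1 := sq_sum_left X (Gbar * K)
  have hGsq : (0:ℝ) ≤ ∑ i, ∑ j, (G i j)^2 :=
    Finset.sum_nonneg fun _ _ => Finset.sum_nonneg fun _ _ => sq_nonneg _
  have hchain : ∑ i, ∑ j, ((Xᵀ * (Gbar * K)) i j)^2
      ≤ (2 * ε * opNorm X * opNorm K)^2 * ∑ i, ∑ j, (G i j)^2 := by
    calc ∑ i, ∑ j, ((Xᵀ * (Gbar * K)) i j)^2
        ≤ opNorm X ^ 2 * ∑ i, ∑ j, ((Gbar * K) i j)^2 := hc1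
      _ ≤ opNorm X ^ 2 * (opNorm K ^ 2 * ∑ i, ∑ j, (Gbar i j)^2) :=
          mul_le_mul_of_nonneg_left hc2 (sq_nonneg _)
      _ ≤ opNorm X ^ 2 * (opNorm K ^ 2 * (4 * ε^2 * ∑ i, ∑ j, (G i j)^2)) := by
          apply mul_le_mul_of_nonneg_left _ (sq_nonneg _)
          exact mul_le_mul_of_nonneg_left hc3 (sq_nonneg _)
      _ = (2 * ε * opNorm X * opNorm K)^2 * ∑ i, ∑ j, (G i j)^2 := by ring
  have hmain : frobNorm (Xᵀ * (Gbar * K)) ≤ 2 * ε * opNorm X * opNorm K * frobNorm G := by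
    have hr : 0 ≤ 2 * ε * opNorm X * opNorm K := by positivity
    unfold frobNorm
    calc Real.sqrt (∑ i, ∑ j, ((Xᵀ * (Gbar * K)) i j)^2)
        ≤ Real.sqrt ((2 * ε * opNorm X * opNorm K)^2 * ∑ i, ∑ j, (G i j)^2) :=
          Real.sqrt_le_sqrt hchain
      _ = 2 * ε * opNorm X * opNorm K * Real.sqrt (∑ i, ∑ j, (G i j)^2) := by
          rw [Real.sqrt_mul (sq_nonneg _), Real.sqrt_sq hr]
  -- handle the scalar factor
  have hscale : Xᵀ * ((1 / Real.sqrt d) • (Gbar * K))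
      = (1 / Real.sqrt d) • (Xᵀ * (Gbar * K)) := Matrix.mul_smul _ _ _
  have hinv0 : (0:ℝ) ≤ 1 / Real.sqrt d := by positivity
  have hfs : frobNorm ((1 / Real.sqrt d) • (Xᵀ * (Gbar * K)))
      = (1 / Real.sqrt d) * frobNorm (Xᵀ * (Gbar * K)) := by
    unfold frobNorm
    simp only [Matrix.smul_apply, smul_eq_mul, mul_pow, ← Finset.mul_sum]
    rw [Real.sqrt_mul (sq_nonneg _), Real.sqrt_sq hinv0]
  rw [hscale, hfs]
  have heq : (2 * ε / Real.sqrt d) * opNorm X * opNorm K * frobNorm G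
      = (1 / Real.sqrt d) * (2 * ε * opNorm X * opNorm K * frobNorm G) := by ring
  rw [heq]
  exact mul_le_mul_of_nonneg_left hmain hinv0
end

section
/- Let T, d ≥ 1, let ε ∈ [0,1], let j* ∈ {1,…,T}, and let A ∈ ℝ^{T×T} be a row-stochastic matrix that is ε-sink-collapsed to j*. Let X ∈ ℝ^{T×d}, Q ∈ ℝ^{T×d}, and G ∈ ℝ^{T×T} be arbitrary, and define Ḡ ∈ ℝ^{T×T} row-wise by letting the i-th row of Ḡ equal (diag(a⁽ⁱ⁾) − a⁽ⁱ⁾·(a⁽ⁱ⁾)ᵀ)·g⁽ⁱ⁾, where a⁽ⁱ⁾ is the i-th row of A and g⁽ⁱ⁾ the i-th row of G. Then ‖Xᵀ·((1/√d)·Ḡᵀ·Q)‖_F ≤ (2ε/√d)·‖X‖₂·‖Q‖₂·‖G‖_F; i.e., the gradient of the loss with respect to the key weight matrix W_K in causal self-attention is bounded by (2ε/√d)·‖X‖₂·‖Q‖₂·‖∂L/∂A‖_F. -/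
open Finset Matrix

open scoped Matrix.Norms.L2Operator

example {m n : ℕ} (A : Matrix (Fin m) (Fin n) ℝ) : opNorm A = ‖A‖ := rfl

noncomputable def en {n : ℕ} (v : Fin n → ℝ) : ℝ := Real.sqrt (∑ j, v j ^ 2)

lemma en_nonneg {n : ℕ} (v : Fin n → ℝ) : 0 ≤ en v := Real.sqrt_nonneg _

lemma en_sq {n : ℕ} (v : Fin n → ℝ) : en v ^ 2 = ∑ j, v j ^ 2 :=
  Real.sq_sqrt (by positivity)

lemma en_mulVec_le {m n : ℕ} (A : Matrix (Fin m) (Fin n) ℝ) (x : Fin n → ℝ) :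
    en (A.mulVec x) ≤ ‖A‖ * en x := by
  have h := A.l2_opNorm_mulVec (((EuclideanSpace.equiv (Fin n) ℝ).symm x))
  simpa [en, EuclideanSpace.norm_eq, Real.norm_eq_abs, sq_abs] using h

lemma frob_nonneg {m n : ℕ} (M : Matrix (Fin m) (Fin n) ℝ) : 0 ≤ frobNorm M :=
  Real.sqrt_nonneg _

lemma frob_transpose {m n : ℕ} (M : Matrix (Fin m) (Fin n) ℝ) :
    frobNorm Mᵀ = frobNorm M := by
  rw [frobNorm, frobNorm, Finset.sum_comm]; rfl

lemma frob_mul_left {m k n : ℕ} (P : Matrix (Fin m) (Fin k) ℝ) (M : Matrix (Fin k) (Fin n) ℝ) :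
    frobNorm (P * M) ≤ ‖P‖ * frobNorm M := by
  have hcol : ∀ j, ∑ i, ((P * M) i j) ^ 2 ≤ ‖P‖ ^ 2 * ∑ l, (M l j) ^ 2 := by
    intro j
    have h1 : en (fun i => (P * M) i j) ≤ ‖P‖ * en (fun l => M l j) := by
      have h := en_mulVec_le P (fun l => M l j)
      have he : (fun i => (P * M) i j) = P.mulVec (fun l => M l j) := by
        ext i; simp [Matrix.mul_apply, Matrix.mulVec, dotProduct]
      rwa [he]
    calc ∑ i, ((P * M) i j) ^ 2 = en (fun i => (P * M) i j) ^ 2 := (en_sq _).symm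
      _ ≤ (‖P‖ * en (fun l => M l j)) ^ 2 := by
          have := en_nonneg (fun i => (P * M) i j); nlinarith
      _ = ‖P‖ ^ 2 * ∑ l, (M l j) ^ 2 := by rw [mul_pow, en_sq]
  calc frobNorm (P * M) = Real.sqrt (∑ j, ∑ i, ((P * M) i j) ^ 2) := by
        rw [frobNorm, Finset.sum_comm]
    _ ≤ Real.sqrt (∑ j : Fin n, ‖P‖ ^ 2 * ∑ l, (M l j) ^ 2) :=
        Real.sqrt_le_sqrt (Finset.sum_le_sum fun j _ => hcol j)
    _ = Real.sqrt (‖P‖ ^ 2 * ∑ j : Fin n, ∑ l, (M l j) ^ 2) := by rw [← Finset.mul_sum]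
    _ = ‖P‖ * frobNorm M := by
        rw [Real.sqrt_mul (by positivity), Real.sqrt_sq (norm_nonneg _), frobNorm,
          Finset.sum_comm]

lemma frob_mul_right {m k n : ℕ} (M : Matrix (Fin m) (Fin k) ℝ) (Q : Matrix (Fin k) (Fin n) ℝ) :
    frobNorm (M * Q) ≤ frobNorm M * ‖Q‖ := by
  have hq : ‖Qᵀ‖ = ‖Q‖ := by
    have h : Qᵀ = Qᴴ := by ext i j; simp [Matrix.conjTranspose_apply]
    rw [h, Matrix.l2_opNorm_conjTranspose]
  calc frobNorm (M * Q) = frobNorm (Qᵀ * Mᵀ) := by rw [← Matrix.transpose_mul, frob_transpose]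
    _ ≤ ‖Qᵀ‖ * frobNorm Mᵀ := frob_mul_left _ _
    _ = frobNorm M * ‖Q‖ := by rw [hq, frob_transpose]; ring

lemma frob_smul {m n : ℕ} (c : ℝ) (M : Matrix (Fin m) (Fin n) ℝ) :
    frobNorm (c • M) = |c| * frobNorm M := by
  rw [frobNorm, frobNorm]
  have h : ∀ i j, ((c • M) i j) ^ 2 = c ^ 2 * (M i j) ^ 2 := by
    intro i j; simp [Matrix.smul_apply, mul_pow]
  simp_rw [h, ← Finset.mul_sum]
  rw [Real.sqrt_mul (sq_nonneg c), Real.sqrt_sq_eq_abs]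

lemma abs_B_row_sum {T : ℕ} (ε : ℝ) (jstar : Fin T) (a : Fin T → ℝ)
    (ha0 : ∀ j, 0 ≤ a j) (ha1 : ∑ j, a j = 1)
    (hc : ∑ j ∈ Finset.univ.erase jstar, a j ≤ ε) (j : Fin T) :
    ∑ k, |(Matrix.diagonal a - Matrix.vecMulVec a a) j k| ≤ 2 * ε := by
  have haj1 : a j ≤ 1 := by
    rw [← ha1]
    exact Finset.single_le_sum (fun k _ => ha0 k) (Finset.mem_univ j)
  have herase : ∑ k ∈ Finset.univ.erase j, a k = 1 - a j := by
    have := Finset.add_sum_erase Finset.univ a (Finset.mem_univ j)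
    linarith [this.trans ha1]
  have hsum : ∑ k, |(Matrix.diagonal a - Matrix.vecMulVec a a) j k|
      = 2 * (a j * (1 - a j)) := by
    rw [← Finset.add_sum_erase Finset.univ _ (Finset.mem_univ j)]
    have h1 : |(Matrix.diagonal a - Matrix.vecMulVec a a) j j| = a j * (1 - a j) := by
      simp only [Matrix.sub_apply, Matrix.diagonal_apply_eq, Matrix.vecMulVec_apply]
      rw [abs_of_nonneg (by nlinarith [ha0 j, haj1])]; ring
    have h2 : ∀ k ∈ Finset.univ.erase j,
        |(Matrix.diagonal a - Matrix.vecMulVec a a) j k| = a j * a k := by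
      intro k hk
      have hkj : k ≠ j := Finset.ne_of_mem_erase hk
      simp only [Matrix.sub_apply, Matrix.diagonal_apply_ne' _ hkj, Matrix.vecMulVec_apply]
      rw [abs_of_nonpos (by nlinarith [ha0 j, ha0 k]), zero_sub, neg_neg]
    rw [h1, Finset.sum_congr rfl h2, ← Finset.mul_sum, herase]
    ring
  rw [hsum]
  by_cases hj : j = jstar
  · subst hj
    have : 1 - a j ≤ ε := by rw [← herase]; exact hc
    nlinarith [ha0 j]
  · have haje : a j ≤ ε := by
      refine le_trans ?_ hc
      exact Finset.single_le_sum (fun k _ => ha0 k) (Finset.mem_erase.mpr ⟨hj, Finset.mem_univ j⟩)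
    nlinarith [ha0 j]

lemma B_symm {T : ℕ} (a : Fin T → ℝ) (j k : Fin T) :
    (Matrix.diagonal a - Matrix.vecMulVec a a) j k
      = (Matrix.diagonal a - Matrix.vecMulVec a a) k j := by
  simp only [Matrix.sub_apply, Matrix.vecMulVec_apply]
  rw [Matrix.diagonal_apply, Matrix.diagonal_apply]
  by_cases h : j = k
  · subst h; ring
  · rw [if_neg h, if_neg (Ne.symm h)]; ring

lemma B_row_bound {T : ℕ} (ε : ℝ) (jstar : Fin T) (a g : Fin T → ℝ)
    (ha0 : ∀ j, 0 ≤ a j) (ha1 : ∑ j, a j = 1)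
    (hc : ∑ j ∈ Finset.univ.erase jstar, a j ≤ ε) :
    ∑ j, ((Matrix.diagonal a - Matrix.vecMulVec a a).mulVec g j) ^ 2
      ≤ (2 * ε) ^ 2 * ∑ k, (g k) ^ 2 := by
  set B := Matrix.diagonal a - Matrix.vecMulVec a a with hB
  have hε : 0 ≤ ε := by
    refine le_trans ?_ hc
    exact Finset.sum_nonneg fun k _ => ha0 k
  have hrow : ∀ j, ∑ k, |B j k| ≤ 2 * ε := abs_B_row_sum ε jstar a ha0 ha1 hc
  have hcol : ∀ k, ∑ j, |B j k| ≤ 2 * ε := by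
    intro k
    calc ∑ j, |B j k| = ∑ j, |B k j| := by
          refine Finset.sum_congr rfl fun j _ => ?_
          rw [hB, B_symm a j k]
      _ ≤ 2 * ε := hrow k
  have hstep : ∀ j, (B.mulVec g j) ^ 2 ≤ (2 * ε) * ∑ k, |B j k| * (g k) ^ 2 := by
    intro j
    have h1 : (B.mulVec g j) ^ 2 ≤ (∑ k, |B j k| * |g k|) ^ 2 := by
      have habs : |B.mulVec g j| ≤ ∑ k, |B j k| * |g k| := by
        calc |B.mulVec g j| = |∑ k, B j k * g k| := rfl
          _ ≤ ∑ k, |B j k * g k| := Finset.abs_sum_le_sum_abs _ _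
          _ = ∑ k, |B j k| * |g k| := by simp_rw [abs_mul]
      calc (B.mulVec g j) ^ 2 = |B.mulVec g j| ^ 2 := (sq_abs _).symm
        _ ≤ (∑ k, |B j k| * |g k|) ^ 2 := by
            have h0 : (0:ℝ) ≤ |B.mulVec g j| := abs_nonneg _
            nlinarith
    have h2 : (∑ k, |B j k| * |g k|) ^ 2
        ≤ (∑ k, |B j k|) * ∑ k, |B j k| * (g k) ^ 2 := by
      have hcs := Finset.sum_mul_sq_le_sq_mul_sq Finset.univ
        (fun k => Real.sqrt (|B j k|)) (fun k => Real.sqrt (|B j k|) * |g k|)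
      have hl : ∀ k, Real.sqrt (|B j k|) * (Real.sqrt (|B j k|) * |g k|)
          = |B j k| * |g k| := by
        intro k; rw [← mul_assoc, Real.mul_self_sqrt (abs_nonneg _)]
      have hr1 : ∀ k, Real.sqrt (|B j k|) ^ 2 = |B j k| := fun k =>
        Real.sq_sqrt (abs_nonneg _)
      have hr2 : ∀ k, (Real.sqrt (|B j k|) * |g k|) ^ 2 = |B j k| * (g k) ^ 2 := by
        intro k; rw [mul_pow, Real.sq_sqrt (abs_nonneg _), sq_abs]
      simp_rw [hl, hr1, hr2] at hcs
      exact hcs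
    have h3 : (∑ k, |B j k|) * ∑ k, |B j k| * (g k) ^ 2
        ≤ (2 * ε) * ∑ k, |B j k| * (g k) ^ 2 := by
      have hnn : 0 ≤ ∑ k, |B j k| * (g k) ^ 2 :=
        Finset.sum_nonneg fun k _ => mul_nonneg (abs_nonneg _) (sq_nonneg _)
      exact mul_le_mul_of_nonneg_right (hrow j) hnn
    linarith
  calc ∑ j, (B.mulVec g j) ^ 2
      ≤ ∑ j : Fin T, (2 * ε) * ∑ k, |B j k| * (g k) ^ 2 :=
        Finset.sum_le_sum fun j _ => hstep j
    _ = (2 * ε) * ∑ k : Fin T, (∑ j, |B j k|) * (g k) ^ 2 := by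
        rw [← Finset.mul_sum, Finset.sum_comm]
        congr 1
        refine Finset.sum_congr rfl fun k _ => ?_
        rw [Finset.sum_mul]
    _ ≤ (2 * ε) * ∑ k : Fin T, (2 * ε) * (g k) ^ 2 := by
        refine mul_le_mul_of_nonneg_left (Finset.sum_le_sum fun k _ => ?_) (by linarith)
        exact mul_le_mul_of_nonneg_right (hcol k) (sq_nonneg _)
    _ = (2 * ε) ^ 2 * ∑ k, (g k) ^ 2 := by rw [← Finset.mul_sum]; ring

/-- Let `A : ℝ^{T×T}` be row-stochastic and ε-sink-collapsed to `j*`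
(`ε ∈ [0,1]`). For arbitrary `X, Q : ℝ^{T×d}` and `G : ℝ^{T×T}`, let `Ḡ` be the matrix
whose `i`-th row is `(diag(a⁽ⁱ⁾) − a⁽ⁱ⁾·(a⁽ⁱ⁾)ᵀ) · g⁽ⁱ⁾` (rows of `A` and `G`).
Then the gradient of the loss w.r.t. the key weights,
`∂L/∂W_K = Xᵀ·((1/√d)·Ḡᵀ·Q)`, satisfies
`‖Xᵀ·((1/√d)·Ḡᵀ·Q)‖_F ≤ (2ε/√d)·‖X‖₂·‖Q‖₂·‖G‖_F`. -/
theorem key_gradient_vanishes_of_sink_collapse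
    (T d : ℕ) (hT : 1 ≤ T) (hd : 1 ≤ d)
    (ε : ℝ) (hε0 : 0 ≤ ε) (hε1 : ε ≤ 1)
    (jstar : Fin T) (A : Matrix (Fin T) (Fin T) ℝ)
    (hA_nonneg : ∀ i j, 0 ≤ A i j) (hA_rows : ∀ i, ∑ j, A i j = 1)
    (hcollapse : ∀ i, ∑ j ∈ Finset.univ.erase jstar, A i j ≤ ε)
    (X Q : Matrix (Fin T) (Fin d) ℝ)
    (G Gbar : Matrix (Fin T) (Fin T) ℝ)
    (hGbar : ∀ i, Gbar i =
      (Matrix.diagonal (A i) - Matrix.vecMulVec (A i) (A i)).mulVec (G i)) :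
    frobNorm (Xᵀ * ((1 / Real.sqrt d) • (Gbarᵀ * Q)))
      ≤ (2 * ε / Real.sqrt d) * opNorm X * opNorm Q * frobNorm G := by
  have hsd : 0 < Real.sqrt d := Real.sqrt_pos.mpr (by exact_mod_cast Nat.lt_of_lt_of_le Nat.zero_lt_one hd)
  -- frobNorm Gbar ≤ 2ε * frobNorm G
  have hGbar_frob : frobNorm Gbar ≤ 2 * ε * frobNorm G := by
    have hsq : ∑ i, ∑ j, (Gbar i j) ^ 2 ≤ (2 * ε) ^ 2 * ∑ i, ∑ j, (G i j) ^ 2 := by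
      rw [Finset.mul_sum]
      refine Finset.sum_le_sum fun i _ => ?_
      have h := B_row_bound ε jstar (A i) (G i) (hA_nonneg i) (hA_rows i) (hcollapse i)
      calc ∑ j, (Gbar i j) ^ 2
          = ∑ j, ((Matrix.diagonal (A i) - Matrix.vecMulVec (A i) (A i)).mulVec (G i) j) ^ 2 := by
            rw [hGbar i]
        _ ≤ (2 * ε) ^ 2 * ∑ k, (G i k) ^ 2 := h
    calc frobNorm Gbar = Real.sqrt (∑ i, ∑ j, (Gbar i j) ^ 2) := rfl
      _ ≤ Real.sqrt ((2 * ε) ^ 2 * ∑ i, ∑ j, (G i j) ^ 2) := Real.sqrt_le_sqrt hsq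
      _ = 2 * ε * frobNorm G := by
          rw [Real.sqrt_mul (sq_nonneg _), Real.sqrt_sq (by linarith), frobNorm]
  have hXt : ‖Xᵀ‖ = ‖X‖ := by
    have h : Xᵀ = Xᴴ := by ext i j; simp [Matrix.conjTranspose_apply]
    rw [h, Matrix.l2_opNorm_conjTranspose]
  have hsmul : Xᵀ * ((1 / Real.sqrt d) • (Gbarᵀ * Q))
      = (1 / Real.sqrt d) • (Xᵀ * (Gbarᵀ * Q)) := by
    rw [Matrix.mul_smul]
  have hmain : frobNorm (Xᵀ * (Gbarᵀ * Q)) ≤ ‖X‖ * (2 * ε * frobNorm G * ‖Q‖) := by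
    calc frobNorm (Xᵀ * (Gbarᵀ * Q)) ≤ ‖Xᵀ‖ * frobNorm (Gbarᵀ * Q) := frob_mul_left _ _
      _ ≤ ‖Xᵀ‖ * (frobNorm Gbarᵀ * ‖Q‖) := by
          refine mul_le_mul_of_nonneg_left (frob_mul_right _ _) (norm_nonneg _)
      _ ≤ ‖X‖ * (2 * ε * frobNorm G * ‖Q‖) := by
          rw [hXt, frob_transpose]
          refine mul_le_mul_of_nonneg_left ?_ (norm_nonneg _)
          exact mul_le_mul_of_nonneg_right hGbar_frob (norm_nonneg _)
  have hop : opNorm X = ‖X‖ := rfl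
  have hopQ : opNorm Q = ‖Q‖ := rfl
  rw [hsmul, frob_smul, hop, hopQ, abs_of_nonneg (by positivity)]
  calc (1 / Real.sqrt d) * frobNorm (Xᵀ * (Gbarᵀ * Q))
      ≤ (1 / Real.sqrt d) * (‖X‖ * (2 * ε * frobNorm G * ‖Q‖)) := by
        exact mul_le_mul_of_nonneg_left hmain (by positivity)
    _ = (2 * ε / Real.sqrt d) * ‖X‖ * ‖Q‖ * frobNorm G := by
        field_simp
end
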